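/- arXiv:2408.12883 — 6 statements merged into one kernel-verified Lean document; each statement's English description precedes it below -/
import Mathlib

section
/- Let E₁,...,E_m be nonempty compact subsets of ℝ such that Eᵢ is a union of at most (Nᵢ+1) discrete sets. Then there exists a positive integer K, depending only on m and N₁,...,N_m, such that for every linear map v : ℝ^m → ℝ with real coefficients, the image v(E₁ × ⋯ × E_m) is compact and a union of at most K discrete subsets of ℝ. -/
/-- A subset `S` of a topological space is discrete if every point of `S` has an
open neighborhood meeting `S` only in that point. -/
def IsDiscreteIn {T : Type*} [TopologicalSpace T] (S : Set T) : Prop :=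
  ∀ x ∈ S, ∃ U : Set T, IsOpen U ∧ U ∩ S = {x}

/-!
A closed subset `S` of a regular space is a union of `n` discrete sets iff `derivedSet^[n] S = ∅`:
the sets `S⁽ᵏ⁾ \ S⁽ᵏ⁺¹⁾` are discrete; conversely, a point of `S⁽ⁿ⁾` lies in some discrete piece
`D`, hence is a limit of points of `S⁽ⁿ⁻¹⁾` near which `D` is absent, and induction applies
there. The image `v(E₁ × ⋯ × E_m)` is the Minkowski sum `∑ cᵢ • Eᵢ` with `cᵢ = v(eᵢ)`, and for
compact `A`, `B` one has `(A + B)' ⊆ A' + B ∪ A + B'`: if `aₙ + bₙ → x` with `aₙ + bₙ ≠ x`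
and `aₙ → a`, then infinitely often `aₙ ≠ a` or `bₙ ≠ x - a`. Hence vanishing orders of derived
sets add up under sums, so `K = ∑ᵢ (Nᵢ + 1) + 1` works.
-/

open Set Filter Topology Pointwise

section DerivedSet

variable {X : Type*} [TopologicalSpace X]

lemma derivedSet_iterate_mono (n : ℕ) : Monotone (derivedSet^[n] : Set X → Set X) :=
  Monotone.iterate (fun A B h => derivedSet_mono A B h) n

lemma derivedSet_iterate_union (n : ℕ) (A B : Set X) :
    derivedSet^[n] (A ∪ B) = derivedSet^[n] A ∪ derivedSet^[n] B :=
  Function.Semiconj₂.iterate (f := derivedSet) derivedSet_union n A B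

@[simp]
lemma derivedSet_empty : derivedSet (∅ : Set X) = ∅ := by
  ext x; simp [AccPt]

@[simp]
lemma derivedSet_iterate_empty (n : ℕ) : derivedSet^[n] (∅ : Set X) = ∅ :=
  Function.iterate_fixed derivedSet_empty n

lemma IsClosed.derivedSet_iterate_subset {A : Set X} (hA : IsClosed A) (n : ℕ) :
    derivedSet^[n] A ⊆ A := by
  induction n with
  | zero => rfl
  | succ n ih =>
    rw [Function.iterate_succ_apply]
    exact (derivedSet_iterate_mono n ((isClosed_iff_derivedSet_subset A).mp hA)).trans ih

lemma mem_derivedSet_iff_mem_closure_diff {A : Set X} {x : X} :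
    x ∈ derivedSet A ↔ x ∈ closure (A \ {x}) := by
  rw [mem_derivedSet, accPt_principal_iff_clusterPt, mem_closure_iff_clusterPt]

lemma IsOpen.inter_derivedSet_subset {U : Set X} (hU : IsOpen U) (A : Set X) :
    U ∩ derivedSet A ⊆ derivedSet (U ∩ A) := by
  rintro x ⟨hxU, hxA⟩
  rw [mem_derivedSet, accPt_iff_nhds] at hxA ⊢
  intro V hV
  obtain ⟨y, ⟨⟨hyV, hyU⟩, hyA⟩, hyx⟩ := hxA (V ∩ U) (inter_mem hV (hU.mem_nhds hxU))
  exact ⟨y, ⟨hyV, hyU, hyA⟩, hyx⟩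

lemma IsOpen.inter_derivedSet_iterate_subset {U : Set X} (hU : IsOpen U) (A : Set X) (n : ℕ) :
    U ∩ derivedSet^[n] A ⊆ derivedSet^[n] (U ∩ A) := by
  induction n with
  | zero => rfl
  | succ n ih =>
    rw [Function.iterate_succ_apply', Function.iterate_succ_apply']
    exact (hU.inter_derivedSet_subset _).trans (derivedSet_mono _ _ ih)

lemma Homeomorph.image_derivedSet {Y : Type*} [TopologicalSpace Y] (f : X ≃ₜ Y) (A : Set X) :
    f '' derivedSet A = derivedSet (f '' A) := by
  refine (f.continuous.image_derivedSet f.injective).antisymm fun x hx => ?_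
  have h := f.symm.continuous.image_derivedSet f.symm.injective (mem_image_of_mem f.symm hx)
  simp only [image_image, Homeomorph.symm_apply_apply, image_id'] at h
  exact ⟨_, h, f.apply_symm_apply x⟩

lemma Homeomorph.image_derivedSet_iterate {Y : Type*} [TopologicalSpace Y] (f : X ≃ₜ Y)
    (n : ℕ) (A : Set X) : f '' derivedSet^[n] A = derivedSet^[n] (f '' A) :=
  Function.Semiconj.iterate_right (f := Set.image f) (ga := derivedSet) (gb := derivedSet)
    (fun A => f.image_derivedSet A) n A

lemma isDiscreteIn_diff_derivedSet (A : Set X) : IsDiscreteIn (A \ derivedSet A) := by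
  rintro x ⟨hxA, hx⟩
  obtain ⟨V, hV, hVA⟩ : ∃ V ∈ 𝓝 x, ∀ y ∈ V ∩ A, y = x := by
    simpa [accPt_iff_nhds] using hx
  obtain ⟨U, hUV, hU, hxU⟩ := mem_nhds_iff.mp hV
  refine ⟨U, hU, subset_antisymm ?_ (singleton_subset_iff.mpr ⟨hxU, hxA, hx⟩)⟩
  rintro y ⟨hyU, hyA, -⟩
  exact hVA y ⟨hUV hyU, hyA⟩

lemma derivedSet_singleton [T1Space X] (x : X) : derivedSet ({x} : Set X) = ∅ := by
  refine eq_empty_of_forall_notMem fun y hy => ?_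
  rw [mem_derivedSet, accPt_iff_nhds] at hy
  rcases eq_or_ne y x with rfl | hyx
  · obtain ⟨z, ⟨-, rfl⟩, hz⟩ := hy univ univ_mem
    exact hz rfl
  · obtain ⟨z, ⟨hz, rfl⟩, -⟩ := hy {x}ᶜ (compl_singleton_mem_nhds hyx)
    exact hz rfl

lemma isCompact_derivedSet [T2Space X] {A : Set X} (hA : IsCompact A) :
    IsCompact (derivedSet A) :=
  hA.of_isClosed_subset (isClosed_derivedSet A) ((isClosed_iff_derivedSet_subset A).mp hA.isClosed)

theorem IsClosed.derivedSet_iterate_eq_empty_of_subset_iUnion [T3Space X] {n : ℕ} {S : Set X}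
    (hS : IsClosed S) {D : Fin n → Set X} (hD : ∀ j, IsDiscreteIn (D j)) (hSD : S ⊆ ⋃ j, D j) :
    derivedSet^[n] S = ∅ := by
  induction n generalizing S with
  | zero => simpa using hSD
  | succ n ih =>
    refine eq_empty_of_forall_notMem fun x hx => ?_
    obtain ⟨j, hxj⟩ := mem_iUnion.mp (hSD (hS.derivedSet_iterate_subset _ hx))
    obtain ⟨U, hU, hUD⟩ := hD j x hxj
    have hxU : x ∈ U := (hUD.ge (mem_singleton x)).1
    rw [Function.iterate_succ_apply', mem_derivedSet, accPt_iff_nhds] at hx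
    obtain ⟨y, ⟨hyU, hy⟩, hyx⟩ := hx U (hU.mem_nhds hxU)
    -- `B` is taken closed so that the induction hypothesis applies to `B ∩ S`.
    obtain ⟨B, hB, hBc, hBU⟩ := exists_mem_nhds_isClosed_subset
      ((hU.sdiff isClosed_singleton).mem_nhds ⟨hyU, hyx⟩)
    have hBS : derivedSet^[n] (B ∩ S) = ∅ := by
      refine ih (hBc.inter hS) (fun i => hD (j.succAbove i)) fun z ⟨hzB, hzS⟩ => ?_
      obtain ⟨i, hzi⟩ := mem_iUnion.mp (hSD hzS)
      have hij : i ≠ j := by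
        rintro rfl
        have : z ∈ U ∩ D i := ⟨(hBU hzB).1, hzi⟩
        exact (hBU hzB).2 (hUD ▸ this)
      obtain ⟨k, rfl⟩ := Fin.exists_succAbove_eq hij
      exact mem_iUnion.mpr ⟨k, hzi⟩
    have hyB : y ∈ derivedSet^[n] (B ∩ S) :=
      derivedSet_iterate_mono n (inter_subset_inter_left _ interior_subset)
        (isOpen_interior.inter_derivedSet_iterate_subset S n
          ⟨mem_interior_iff_mem_nhds.mpr hB, hy⟩)
    simp [hBS] at hyB

theorem IsClosed.exists_discrete_cover_of_derivedSet_iterate_eq_empty {n : ℕ} {S : Set X}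
    (hS : IsClosed S) (h : derivedSet^[n] S = ∅) :
    ∃ D : Fin n → Set X, (∀ j, IsDiscreteIn (D j)) ∧ S = ⋃ j, D j := by
  refine ⟨fun k => derivedSet^[k] S \ derivedSet^[k + 1] S, fun k => ?_, ?_⟩
  · simpa only [Function.iterate_succ_apply'] using isDiscreteIn_diff_derivedSet _
  refine subset_antisymm (fun x hx => ?_)
    (iUnion_subset fun k => sdiff_subset.trans (hS.derivedSet_iterate_subset k))
  by_contra hx'
  simp only [mem_iUnion, Set.mem_sdiff, not_exists, not_and, not_not] at hx'
  have hmem : ∀ k ≤ n, x ∈ derivedSet^[k] S := by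
    intro k hk
    induction k with
    | zero => exact hx
    | succ k ih => exact hx' ⟨k, hk⟩ (ih (by omega))
  simpa [h] using hmem n le_rfl

end DerivedSet

section AddGroup

variable {G : Type*} [AddGroup G] [TopologicalSpace G] [IsTopologicalAddGroup G]
  [FirstCountableTopology G]

lemma derivedSet_add_subset {A B : Set G} (hA : IsCompact A) (hB : IsClosed B) :
    derivedSet (A + B) ⊆ (derivedSet A + B) ∪ (A + derivedSet B) := by
  intro x hx
  rw [mem_derivedSet_iff_mem_closure_diff, mem_closure_iff_seq_limit] at hx
  obtain ⟨u, hu, hux⟩ := hx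
  choose a ha b hb hab using fun n => mem_add.mp (hu n).1
  obtain ⟨l, hl, φ, hφ, hal⟩ := hA.tendsto_subseq ha
  have hbl : Tendsto (b ∘ φ) atTop (𝓝 (-l + x)) := by
    have hb_eq : b ∘ φ = fun n => -a (φ n) + u (φ n) :=
      funext fun n => by simp [← hab, neg_add_cancel_left]
    rw [hb_eq]
    exact hal.neg.add (hux.comp hφ.tendsto_atTop)
  have hxl : -l + x ∈ B := hB.mem_of_tendsto hbl (Eventually.of_forall fun n => hb _)
  have hne : ∀ n, a (φ n) ∈ A \ {l} ∨ b (φ n) ∈ B \ {-l + x} := by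
    intro n
    rcases eq_or_ne (a (φ n)) l with hal | hal
    · refine Or.inr ⟨hb _, fun hbx => (hu (φ n)).2 ?_⟩
      rw [mem_singleton_iff, ← hab, hal, (mem_singleton_iff.mp hbx), add_neg_cancel_left]
    · exact Or.inl ⟨ha _, hal⟩
  rw [← add_neg_cancel_left l x]
  rcases frequently_or_distrib.mp (Frequently.of_forall (f := atTop) hne) with h | h
  · exact Or.inl (add_mem_add
      (mem_derivedSet_iff_mem_closure_diff.mpr (mem_closure_of_frequently_of_tendsto h hal)) hxl)
  · exact Or.inr (add_mem_add hl
      (mem_derivedSet_iff_mem_closure_diff.mpr (mem_closure_of_frequently_of_tendsto h hbl)))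

lemma derivedSet_iterate_add_eq_empty [T2Space G] {A B : Set G} (hA : IsCompact A)
    (hB : IsCompact B) {a b : ℕ} (ha : derivedSet^[a] A = ∅) (hb : derivedSet^[b] B = ∅) :
    derivedSet^[a + b] (A + B) = ∅ := by
  induction a generalizing A B b with
  | zero => simp [show A = ∅ from ha]
  | succ a iha =>
    induction b generalizing B with
    | zero => simp [show B = ∅ from hb]
    | succ b ihb =>
      have h₁ : derivedSet^[a + b + 1] (derivedSet A + B) = ∅ := by
        rw [add_assoc]
        exact iha (isCompact_derivedSet hA) hB (by rwa [← Function.iterate_succ_apply]) hb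
      have h₂ : derivedSet^[a + b + 1] (A + derivedSet B) = ∅ := by
        rw [add_right_comm]
        exact ihb (isCompact_derivedSet hB) (by rwa [← Function.iterate_succ_apply])
      rw [show a + 1 + (b + 1) = a + b + 1 + 1 by omega, Function.iterate_succ_apply]
      refine subset_empty_iff.mp
        ((derivedSet_iterate_mono _ (derivedSet_add_subset hA hB.isClosed)).trans ?_)
      rw [derivedSet_iterate_union, h₁, h₂, union_empty]

end AddGroup

lemma isCompact_finsetSum {M ι : Type*} [AddCommMonoid M] [TopologicalSpace M] [ContinuousAdd M]
    {S : ι → Set M} {s : Finset ι} (hS : ∀ i ∈ s, IsCompact (S i)) :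
    IsCompact (∑ i ∈ s, S i) := by
  classical
  induction s using Finset.induction_on with
  | empty => simp
  | insert i s hi ih =>
    rw [Finset.sum_insert hi]
    exact (hS i (s.mem_insert_self i)).add (ih fun j hj => hS j (Finset.mem_insert_of_mem hj))

lemma derivedSet_iterate_finsetSum_eq_empty {G ι : Type*} [AddCommGroup G] [TopologicalSpace G]
    [IsTopologicalAddGroup G] [FirstCountableTopology G] [T2Space G] {S : ι → Set G}
    {s : Finset ι} (hS : ∀ i ∈ s, IsCompact (S i)) {r : ι → ℕ}
    (hr : ∀ i ∈ s, derivedSet^[r i] (S i) = ∅) :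
    derivedSet^[∑ i ∈ s, r i + 1] (∑ i ∈ s, S i) = ∅ := by
  classical
  induction s using Finset.induction_on with
  | empty => simp [← Set.singleton_zero, derivedSet_singleton]
  | insert i s hi ih =>
    rw [Finset.sum_insert hi, Finset.sum_insert hi, add_assoc]
    exact derivedSet_iterate_add_eq_empty (hS i (s.mem_insert_self i))
      (isCompact_finsetSum fun j hj => hS j (Finset.mem_insert_of_mem hj))
      (hr i (s.mem_insert_self i))
      (ih (fun j hj => hS j (Finset.mem_insert_of_mem hj))
        fun j hj => hr j (Finset.mem_insert_of_mem hj))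

lemma derivedSet_iterate_smul_eq_empty {K G : Type*} [GroupWithZero K] [Zero G]
    [MulActionWithZero K G] [TopologicalSpace G] [ContinuousConstSMul K G] [T1Space G]
    (c : K) {A : Set G} {n : ℕ} (h : derivedSet^[n] A = ∅) : derivedSet^[n] (c • A) = ∅ := by
  rcases n with _ | n
  · simp [show A = ∅ from h]
  rcases eq_or_ne c 0 with rfl | hc
  · refine subset_empty_iff.mp ((derivedSet_iterate_mono _ (zero_smul_set_subset A)).trans ?_)
    simp [Function.iterate_succ_apply, ← Set.singleton_zero, derivedSet_singleton]
  · have := (Homeomorph.smulOfNeZero c hc).image_derivedSet_iterate (n + 1) A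
    rw [h, image_empty] at this
    simpa [image_smul] using this.symm

lemma LinearMap.image_univ_pi {R ι : Type*} [CommSemiring R] [Fintype ι] [DecidableEq ι]
    (v : (ι → R) →ₗ[R] R) (E : ι → Set R) :
    v '' univ.pi E = ∑ i, v (Pi.single i 1) • E i := by
  have hv : ⇑v = (fun x => ∑ i, x i) ∘ Pi.map (fun i => (v (Pi.single i 1) • ·)) := by
    ext x
    conv_lhs => rw [pi_eq_sum_univ' x]
    simp [mul_comm]
  conv_lhs => rw [hv, image_comp, piMap_image_univ_pi, image_fintype_sum_pi]
  simp only [image_smul]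

theorem derivedSet_iterate_linearMap_image_univ_pi_eq_empty {ι : Type*} [Fintype ι]
    (v : (ι → ℝ) →ₗ[ℝ] ℝ) {E : ι → Set ℝ} (hE : ∀ i, IsCompact (E i)) {r : ι → ℕ}
    (hr : ∀ i, derivedSet^[r i] (E i) = ∅) :
    derivedSet^[∑ i, r i + 1] (v '' univ.pi E) = ∅ := by
  classical
  rw [v.image_univ_pi]
  exact derivedSet_iterate_finsetSum_eq_empty
    (fun i _ => by simpa only [← image_smul] using (hE i).image (continuous_const_smul _))
    fun i _ => derivedSet_iterate_smul_eq_empty _ (hr i)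

theorem stmt_4 (m : ℕ) (N : Fin m → ℕ) :
    ∃ K : ℕ, 0 < K ∧
      ∀ E : Fin m → Set ℝ,
        (∀ i, (E i).Nonempty) → (∀ i, IsCompact (E i)) →
        (∀ i, ∃ S : Fin (N i + 1) → Set ℝ,
          (∀ j, IsDiscreteIn (S j)) ∧ E i = ⋃ j, S j) →
        ∀ v : (Fin m → ℝ) →ₗ[ℝ] ℝ,
          IsCompact (v '' Set.univ.pi E) ∧
          ∃ S : Fin K → Set ℝ, (∀ j, IsDiscreteIn (S j)) ∧
            v '' Set.univ.pi E = ⋃ j, S j := by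
  refine ⟨∑ i, (N i + 1) + 1, Nat.succ_pos _, fun E _ hE hcover v => ?_⟩
  have hcompact : IsCompact (v '' univ.pi E) :=
    (isCompact_univ_pi hE).image v.continuous_of_finiteDimensional
  refine ⟨hcompact, hcompact.isClosed.exists_discrete_cover_of_derivedSet_iterate_eq_empty ?_⟩
  refine derivedSet_iterate_linearMap_image_univ_pi_eq_empty v hE fun i => ?_
  obtain ⟨S, hS, hES⟩ := hcover i
  exact (hE i).isClosed.derivedSet_iterate_eq_empty_of_subset_iUnion hS hES.subset
end

section
/- Let E₁,...,E_m be nonempty compact subsets of ℝ, let v : ℝ^m → ℝ be linear, and let X = v(E₁ × ⋯ × E_m). If (xₙ) is a sequence in X converging to r such that xₙ ≠ r for all n, then r can be written as r = v(f₁,...,f_m) with fᵢ ∈ Eᵢ for all i and with fₖ an accumulation point of Eₖ for some k. -/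
theorem stmt_6 (m : ℕ) (E : Fin m → Set ℝ)
    (hne : ∀ i, (E i).Nonempty) (hcpt : ∀ i, IsCompact (E i))
    (v : (Fin m → ℝ) →ₗ[ℝ] ℝ) (X : Set ℝ) (hX : X = v '' Set.univ.pi E)
    (x : ℕ → ℝ) (hx : ∀ n, x n ∈ X) (r : ℝ)
    (hconv : Filter.Tendsto x Filter.atTop (nhds r))
    (hner : ∀ n, x n ≠ r) :
    ∃ f : Fin m → ℝ, (∀ i, f i ∈ E i) ∧ r = v f ∧
      ∃ k, f k ∈ closure (E k \ {f k}) := by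
  -- choose preimages
  have hx' : ∀ n, ∃ g : Fin m → ℝ, g ∈ Set.univ.pi E ∧ v g = x n := by
    intro n
    have := hx n
    rw [hX] at this
    obtain ⟨g, hg, hvg⟩ := this
    exact ⟨g, hg, hvg⟩
  choose g hg hvg using hx'
  -- compactness of the product
  have hS : IsCompact (Set.univ.pi E) := isCompact_univ_pi hcpt
  obtain ⟨f, hfS, φ, hφ, hgf⟩ := hS.tendsto_subseq hg
  have hvcont : Continuous v := v.continuous_of_finiteDimensional
  have hvf : Filter.Tendsto (fun n => v (g (φ n))) Filter.atTop (nhds (v f)) :=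
    (hvcont.tendsto f).comp hgf
  have hxφ : Filter.Tendsto (fun n => x (φ n)) Filter.atTop (nhds r) :=
    hconv.comp (hφ.tendsto_atTop)
  have hvfr : v f = r := by
    have : (fun n => v (g (φ n))) = fun n => x (φ n) := funext fun n => hvg (φ n)
    rw [this] at hvf
    exact tendsto_nhds_unique hvf hxφ
  have hfE : ∀ i, f i ∈ E i := fun i => hfS i (Set.mem_univ i)
  have hne' : ∀ n, g (φ n) ≠ f := by
    intro n h
    apply hner (φ n)
    rw [← hvg (φ n), h, hvfr]
  -- pigeonhole: some coordinate differs infinitely often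
  have hpig : ∃ k, {n | g (φ n) k ≠ f k}.Infinite := by
    by_contra h
    push_neg at h
    have : (Set.univ : Set ℕ).Finite := by
      have hsub : (Set.univ : Set ℕ) ⊆ ⋃ k, {n | g (φ n) k ≠ f k} := by
        intro n _
        have := hne' n
        rw [ne_eq, funext_iff] at this
        push_neg at this
        obtain ⟨k, hk⟩ := this
        exact Set.mem_iUnion.2 ⟨k, hk⟩
      exact (Set.finite_iUnion h).subset hsub
    exact Set.infinite_univ this
  obtain ⟨k, hk⟩ := hpig
  refine ⟨f, hfE, hvfr.symm, k, ?_⟩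
  have hfreq : ∃ᶠ n in Filter.atTop, g (φ n) k ∈ E k \ {f k} := by
    have := Nat.frequently_atTop_iff_infinite.2 hk
    refine this.mono fun n hn => ⟨hg (φ n) k (Set.mem_univ k), hn⟩
  have htk : Filter.Tendsto (fun n => g (φ n) k) Filter.atTop (nhds (f k)) :=
    ((continuous_apply k).tendsto f).comp hgf
  exact mem_closure_of_frequently_of_tendsto hfreq htk
end

section
/- For a countable closed subset A of ℝ and a positive integer k, the Cantor-Bendixson rank of A equals k if and only if k is the least number of discrete sets whose union is A. -/
/-- The set of non-isolated points of `X` (relative to `X`). -/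
def lpt (X : Set ℝ) : Set ℝ := {x ∈ X | x ∈ closure (X \ {x})}

/-- Iterated Cantor-Bendixson derivative. -/
def cbIter : ℕ → Set ℝ → Set ℝ
  | 0, X => X
  | n + 1, X => lpt (cbIter n X)

lemma cbIter_succ_subset (A : Set ℝ) (m : ℕ) : cbIter (m+1) A ⊆ cbIter m A :=
  fun _ hx => hx.1

lemma cbIter_subset_self (A : Set ℝ) : ∀ m, cbIter m A ⊆ A
  | 0 => subset_rfl
  | m+1 => (cbIter_succ_subset A m).trans (cbIter_subset_self A m)

lemma cbIter_le (A : Set ℝ) {m n : ℕ} (h : m ≤ n) : cbIter n A ⊆ cbIter m A := by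
  induction n with
  | zero => simpa [Nat.le_zero.mp h] using (subset_rfl : cbIter 0 A ⊆ cbIter 0 A)
  | succ n ih =>
    rcases Nat.eq_or_lt_of_le h with rfl | h'
    · exact subset_rfl
    · exact (cbIter_succ_subset A n).trans (ih (Nat.lt_succ_iff.mp h'))

/-- Lower bound machinery: if `A` is covered by `n` discrete sets, points of
`cbIter m A` inside an open set avoiding the pieces indexed by `F` force
`F.card + m < n`. -/
lemma key_lemma {n : ℕ} (A : Set ℝ) (S : Fin n → Set ℝ)
    (hd : ∀ i, IsDiscreteIn (S i)) (hA : A = ⋃ i, S i) :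
    ∀ m (F : Finset (Fin n)) (V : Set ℝ), IsOpen V →
      (∀ j ∈ F, V ∩ S j = ∅) → ∀ x, x ∈ cbIter m A → x ∈ V → F.card + m < n := by
  intro m
  induction m with
  | zero =>
    intro F V hV hF x hx hxV
    have hxA : x ∈ A := hx
    rw [hA] at hxA
    obtain ⟨i, hi⟩ := Set.mem_iUnion.mp hxA
    have hiF : i ∉ F := by
      intro hmem
      have := hF i hmem
      exact absurd (Set.mem_inter hxV hi) (by rw [this]; exact id)
    have : F.card < n := by
      have h1 : (insert i F).card ≤ n := by
        simpa using Finset.card_le_univ (insert i F)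
      have h2 : (insert i F).card = F.card + 1 := Finset.card_insert_of_notMem hiF
      omega
    omega
  | succ m ih =>
    intro F V hV hF x hx hxV
    have hxA : x ∈ A := cbIter_subset_self A (m+1) hx
    rw [hA] at hxA
    obtain ⟨i, hi⟩ := Set.mem_iUnion.mp hxA
    have hiF : i ∉ F := by
      intro hmem
      have := hF i hmem
      exact absurd (Set.mem_inter hxV hi) (by rw [this]; exact id)
    obtain ⟨U, hU, hUi⟩ := hd i x hi
    have hxU : x ∈ U := by
      have : x ∈ U ∩ S i := by rw [hUi]; rfl
      exact this.1
    -- x is a limit point of cbIter m A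
    have hlim : x ∈ closure (cbIter m A \ {x}) := hx.2
    have hVU : IsOpen (V ∩ U) := hV.inter hU
    obtain ⟨y, hyVU, hy⟩ :=
      (mem_closure_iff.mp hlim) (V ∩ U) hVU (Set.mem_inter hxV hxU)
    -- y ∈ V ∩ U, y ∈ cbIter m A, y ≠ x
    have hyx : y ≠ x := hy.2
    set V' : Set ℝ := (V ∩ U) \ {x} with hV'def
    have hV'open : IsOpen V' := hVU.sdiff isClosed_singleton
    have hyV' : y ∈ V' := ⟨hyVU, hyx⟩
    have hF' : ∀ j ∈ insert i F, V' ∩ S j = ∅ := by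
      intro j hj
      rcases Finset.mem_insert.mp hj with rfl | hj
      · ext z
        simp only [Set.mem_inter_iff, Set.mem_empty_iff_false, iff_false]
        rintro ⟨⟨⟨_, hzU⟩, hzx⟩, hzS⟩
        exact hzx (by have : z ∈ U ∩ S j := ⟨hzU, hzS⟩; rw [hUi] at this; exact this)
      · ext z
        simp only [Set.mem_inter_iff, Set.mem_empty_iff_false, iff_false]
        rintro ⟨⟨⟨hzV, _⟩, _⟩, hzS⟩
        have := hF j hj
        exact absurd (Set.mem_inter hzV hzS) (by rw [this]; exact id)
    have := ih (insert i F) V' hV'open hF' y hy.1 hyV'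
    have hcard : (insert i F).card = F.card + 1 := Finset.card_insert_of_notMem hiF
    omega

lemma cover_implies_empty {n : ℕ} (A : Set ℝ) (S : Fin n → Set ℝ)
    (hd : ∀ i, IsDiscreteIn (S i)) (hA : A = ⋃ i, S i) :
    cbIter n A = ∅ := by
  by_contra h
  obtain ⟨x, hx⟩ := Set.nonempty_iff_ne_empty.mpr h
  have := key_lemma A S hd hA n ∅ Set.univ isOpen_univ
    (by intro j hj; simp at hj) x hx (Set.mem_univ x)
  simp at this

/-- If `cbIter k A = ∅`, then `A` is a union of `k` discrete sets. -/
lemma empty_implies_cover (A : Set ℝ) (k : ℕ) (h : cbIter k A = ∅) :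
    ∃ S : Fin k → Set ℝ, (∀ i, IsDiscreteIn (S i)) ∧ A = ⋃ i, S i := by
  refine ⟨fun i => cbIter i A \ cbIter (i+1) A, ?_, ?_⟩
  · intro i x hx
    have hx1 : x ∈ cbIter (i : ℕ) A := hx.1
    have hx2 : x ∉ lpt (cbIter (i : ℕ) A) := hx.2
    have : x ∉ closure (cbIter (i : ℕ) A \ {x}) := by
      intro hc; exact hx2 ⟨hx1, hc⟩
    obtain ⟨U, hU, hxU, hUd⟩ : ∃ U : Set ℝ, IsOpen U ∧ x ∈ U ∧
        U ∩ (cbIter (i : ℕ) A \ {x}) = ∅ := by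
      have := mem_closure_iff.not.mp this
      push_neg at this
      obtain ⟨U, hU, hxU, hUe⟩ := this
      exact ⟨U, hU, hxU, hUe⟩
    refine ⟨U, hU, ?_⟩
    ext z
    simp only [Set.mem_inter_iff, Set.mem_singleton_iff]
    constructor
    · rintro ⟨hzU, hzi, -⟩
      by_contra hzx
      have : z ∈ U ∩ (cbIter (i : ℕ) A \ {x}) := ⟨hzU, hzi, hzx⟩
      rw [hUd] at this; exact this
    · rintro rfl; exact ⟨hxU, hx⟩
  · ext x
    simp only [Set.mem_iUnion]
    constructor
    · intro hxA
      have hnot : x ∉ cbIter k A := by rw [h]; exact id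
      -- find least level where x drops out
      have : ∀ m : ℕ, x ∈ A → x ∉ cbIter m A →
          ∃ i : ℕ, i < m ∧ x ∈ cbIter i A ∧ x ∉ cbIter (i+1) A := by
        intro m
        induction m with
        | zero => intro hA' hn; exact absurd hA' hn
        | succ m ihm =>
          intro hA' hn
          by_cases hm : x ∈ cbIter m A
          · exact ⟨m, Nat.lt_succ_self m, hm, hn⟩
          · obtain ⟨i, hi, h1, h2⟩ := ihm hA' hm
            exact ⟨i, hi.trans (Nat.lt_succ_self m), h1, h2⟩
      obtain ⟨i, hi, h1, h2⟩ := this k hxA hnot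
      exact ⟨⟨i, hi⟩, h1, h2⟩
    · rintro ⟨i, hi, -⟩
      exact cbIter_subset_self A i hi

theorem stmt_10 (A : Set ℝ) (hcount : A.Countable) (hclosed : IsClosed A)
    (k : ℕ) (hk : 0 < k) :
    (cbIter k A = ∅ ∧ cbIter (k - 1) A ≠ ∅) ↔
      IsLeast {n : ℕ | ∃ S : Fin n → Set ℝ,
        (∀ i, IsDiscreteIn (S i)) ∧ A = ⋃ i, S i} k := by
  constructor
  · rintro ⟨h1, h2⟩
    constructor
    · exact empty_implies_cover A k h1
    · intro n hn
      obtain ⟨S, hd, hA⟩ := hn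
      have hempty : cbIter n A = ∅ := cover_implies_empty A S hd hA
      by_contra hlt
      push_neg at hlt
      have hle : n ≤ k - 1 := by omega
      have : cbIter (k-1) A ⊆ cbIter n A := cbIter_le A hle
      rw [hempty] at this
      exact h2 (Set.subset_empty_iff.mp this)
  · rintro ⟨hmem, hlb⟩
    obtain ⟨S, hd, hA⟩ := hmem
    have h1 : cbIter k A = ∅ := cover_implies_empty A S hd hA
    refine ⟨h1, ?_⟩
    intro hempty
    have : k ≤ k - 1 := hlb (empty_implies_cover A (k-1) hempty)
    omega
end

section
/- Let D be a bounded countably infinite subset of (0, N) for a natural number N, enumerated as D = {dₙ : n ∈ ℕ}. Define aₙ = N(n+1) if n is odd and aₙ = Nn + d_{n/2} if n is even, and let E = {aₙ : n ∈ ℕ}. Then for natural numbers n, m, the inequality 0 < aₙ − a_m < N holds if and only if n = m + 1 and m is odd. -/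
theorem stmt_11 (N : ℕ) (d : ℕ → ℝ) (hd : ∀ k, d k ∈ Set.Ioo (0 : ℝ) N)
    (hinj : Function.Injective d)
    (a : ℕ → ℝ)
    (ha : ∀ n, a n = if Odd n then (N : ℝ) * (n + 1) else (N : ℝ) * n + d (n / 2)) :
    ∀ n m : ℕ, (0 < a n - a m ∧ a n - a m < N) ↔ (n = m + 1 ∧ Odd m) := by
  have hN : (0 : ℝ) < N := lt_trans (hd 0).1 (hd 0).2
  have hb : ∀ k : ℕ, (N : ℝ) * k < a k ∧ a k ≤ (N : ℝ) * (k + 1) := by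
    intro k
    rw [ha k]
    by_cases hk : Odd k
    · simp only [hk, if_true]
      constructor
      · have : (k : ℝ) < k + 1 := by linarith
        nlinarith
      · exact le_refl _
    · rw [if_neg hk]
      have h1 := (hd (k / 2)).1
      have h2 := (hd (k / 2)).2
      constructor <;> nlinarith
  intro n m
  constructor
  · rintro ⟨h1, h2⟩
    have hbn := hb n
    have hbm := hb m
    -- m < n + 1
    have hmn : (N : ℝ) * m < (N : ℝ) * (n + 1) := by linarith
    have hmn' : (m : ℝ) < n + 1 := lt_of_mul_lt_mul_left hmn (le_of_lt hN)
    have hmn'' : m < n + 1 := by exact_mod_cast hmn'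
    -- n < m + 2
    have hnm : (N : ℝ) * n < (N : ℝ) * (m + 2) := by linarith
    have hnm' : (n : ℝ) < m + 2 := lt_of_mul_lt_mul_left hnm (le_of_lt hN)
    have hnm'' : n < m + 2 := by exact_mod_cast hnm'
    have hne : n ≠ m := by
      rintro rfl; simp at h1
    have heq : n = m + 1 := by omega
    refine ⟨heq, ?_⟩
    by_contra hmo
    rw [Nat.not_odd_iff_even] at hmo
    have hno : Odd n := heq ▸ hmo.add_one
    have ham : a m = (N : ℝ) * m + d (m / 2) := by
      rw [ha m, if_neg (by simpa [Nat.not_odd_iff_even] using hmo)]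
    have han : a n = (N : ℝ) * (n + 1) := by rw [ha n, if_pos hno]
    have hd2 := (hd (m / 2)).2
    have : (n : ℝ) = m + 1 := by exact_mod_cast congrArg Nat.cast heq
    nlinarith
  · rintro ⟨rfl, hm⟩
    have hne : ¬ Odd (m + 1) := by
      simp [Nat.even_add_one, Nat.not_odd_iff_even, Nat.not_even_iff_odd.mpr hm]
    have ham : a m = (N : ℝ) * (m + 1) := by rw [ha m, if_pos hm]
    have han : a (m + 1) = (N : ℝ) * (m + 1) + d ((m + 1) / 2) := by
      push_cast [ha (m + 1), if_neg hne]
      ring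
    have h1 := (hd ((m + 1) / 2)).1
    have h2 := (hd ((m + 1) / 2)).2
    constructor <;> [skip; skip] <;> rw [han, ham] <;> linarith
end

section
/- Let σ = (i₁,...,iₙ) ∈ 𝔖 with iₙ = 1, set u(σ) = Σⱼ₌₁^{n−1} iⱼ/3ʲ, and for each k let τₖ be the concatenation of (i₁,...,i_{n−1}) with the length-k sequence (0,2,2,...,2). Then τₖ ∈ 𝔖 and the sequence (v(τₖ))ₖ converges to v(σ). -/
/-!
In base 3, the digit string `0 2 2 … 2` (with `m` twos) placed at position `n` has value
`(1 - 3⁻ᵐ) / 3ⁿ`, which tends to the value `1 / 3ⁿ` of the single digit `1` there. Replacing the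
final `1` of `σ` by `0 2 … 2` keeps the non-final digits in `{0, 2}` and ends in `2`, so the result lies in `𝔖`.
-/

/-- Membership in `𝔖`: a nonempty finite sequence over `{0,1,2}` whose last
entry is nonzero and whose non-final entries are never `1`. -/
def Sgood (l : List ℕ) : Prop :=
  l ≠ [] ∧ (∀ x ∈ l, x ≤ 2) ∧ l.getD (l.length - 1) 0 ≠ 0 ∧
    ∀ j, j < l.length - 1 → l.getD j 0 ≠ 1

/-- `v(σ) = ∑_{j=1}^{n} i_j / 3^j`. -/
noncomputable def vval (l : List ℕ) : ℝ :=
  ∑ j ∈ Finset.range l.length, (l.getD j 0 : ℝ) / 3 ^ (j + 1)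

/-- `u(σ) = ∑_{j=1}^{n-1} i_j / 3^j`. -/
noncomputable def uval (l : List ℕ) : ℝ :=
  ∑ j ∈ Finset.range (l.length - 1), (l.getD j 0 : ℝ) / 3 ^ (j + 1)

/-- `a_{σ,k} = v(σ) - (-1)^{i_n} / (k · 3^{n+1})`. -/
noncomputable def aval (l : List ℕ) (k : ℕ) : ℝ :=
  vval l - (-1 : ℝ) ^ (l.getD (l.length - 1) 0) / (k * 3 ^ (l.length + 1))

namespace List

variable {α : Type*}

theorem getD_length_sub_one {l : List α} (h : l ≠ []) (d : α) :
    l.getD (l.length - 1) d = l.getLast h := by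
  rw [getLast_eq_getElem, getD_eq_getElem]

theorem forall_getD_ne_iff_not_mem_dropLast (l : List α) (c d : α) :
    (∀ j, j < l.length - 1 → l.getD j d ≠ c) ↔ c ∉ l.dropLast := by
  simp only [mem_iff_getElem, length_dropLast, getElem_dropLast, not_exists]
  refine forall_congr' fun j => ⟨fun h hj => ?_, fun h hj => ?_⟩
  · rw [← getD_eq_getElem _ d]; exact h hj
  · rw [getD_eq_getElem _ _ (by omega)]; exact h hj

end List

theorem sgood_append_zero_replicate_two {a : List ℕ} (ha : ∀ x ∈ a, x ≤ 2 ∧ x ≠ 1) (m : ℕ) :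
    Sgood (a ++ 0 :: List.replicate (m + 1) 2) := by
  rw [List.replicate_succ', ← List.cons_append, ← List.append_assoc]
  refine ⟨by simp, ?_, ?_, ?_⟩
  · intro x hx
    simp only [List.mem_append, List.mem_cons, List.mem_replicate, List.not_mem_nil,
      or_false] at hx
    rcases hx with (h | h | ⟨-, h⟩) | h
    · exact (ha x h).1
    all_goals omega
  · rw [List.getD_length_sub_one (by simp) 0, List.getLast_concat]; simp
  · rw [List.forall_getD_ne_iff_not_mem_dropLast, List.dropLast_concat]
    simp only [List.mem_append, List.mem_cons, List.mem_replicate, not_or]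
    exact ⟨fun h => (ha 1 h).2 rfl, by omega, by omega⟩

theorem Sgood.dropLast {l : List ℕ} (hl : Sgood l) : ∀ x ∈ l.dropLast, x ≤ 2 ∧ x ≠ 1 :=
  fun x hx => ⟨hl.2.1 x (List.dropLast_subset l hx),
    fun h => (List.forall_getD_ne_iff_not_mem_dropLast l 1 0).1 hl.2.2.2 (h ▸ hx)⟩

@[simp]
theorem vval_nil : vval [] = 0 := by
  simp [vval]

theorem vval_cons (x : ℕ) (t : List ℕ) : vval (x :: t) = x / 3 + vval t / 3 := by
  simp only [vval, List.length_cons, Finset.sum_range_succ', List.getD_cons_succ,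
    List.getD_cons_zero, Finset.sum_div, pow_succ]
  rw [add_comm]
  congr 1
  · norm_num
  · exact Finset.sum_congr rfl fun j _ => by ring

theorem vval_append (a b : List ℕ) : vval (a ++ b) = vval a + vval b / 3 ^ a.length := by
  induction a with
  | nil => simp
  | cons x t ih =>
    rw [List.cons_append, vval_cons, ih, vval_cons, List.length_cons, pow_succ]
    ring

theorem vval_replicate_two (m : ℕ) : vval (List.replicate m 2) = 1 - (1 / 3 : ℝ) ^ m := by
  induction m with
  | zero => simp
  | succ m ih =>
    rw [List.replicate_succ, vval_cons, ih]
    push_cast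
    ring

theorem tendsto_vval_append_zero_replicate_two (a : List ℕ) :
    Filter.Tendsto (fun m => vval (a ++ 0 :: List.replicate m 2)) Filter.atTop
      (nhds (vval (a ++ [1]))) := by
  have hval : ∀ m, vval (a ++ 0 :: List.replicate m 2) =
      vval a + (1 - (1 / 3 : ℝ) ^ m) / 3 ^ (a.length + 1) := fun m => by
    rw [vval_append, vval_cons, vval_replicate_two, pow_succ]
    push_cast
    ring
  have hlim : vval (a ++ [1]) = vval a + (1 - 0) / 3 ^ (a.length + 1) := by
    rw [vval_append, vval_cons, vval_nil, pow_succ]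
    push_cast
    ring
  simp only [hval, hlim]
  exact ((tendsto_pow_atTop_nhds_zero_of_lt_one (by norm_num) (by norm_num)).const_sub 1
    |>.div_const _).const_add _

theorem stmt_15 (l : List ℕ) (hl : Sgood l) (hlast : l.getD (l.length - 1) 0 = 1)
    (τ : ℕ → List ℕ)
    (hτ : ∀ k, τ k = l.dropLast ++ (0 :: List.replicate (k - 1) 2)) :
    (∀ k, 2 ≤ k → Sgood (τ k)) ∧
      Filter.Tendsto (fun k => vval (τ k)) Filter.atTop (nhds (vval l)) := by
  have hl_eq : l.dropLast ++ [1] = l := by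
    rw [List.getD_length_sub_one hl.1 0] at hlast
    exact hlast ▸ List.dropLast_append_getLast hl.1
  refine ⟨fun k hk => ?_, ?_⟩
  · rw [hτ k, show k - 1 = k - 2 + 1 by omega]
    exact sgood_append_zero_replicate_two hl.dropLast _
  · have h := (tendsto_vval_append_zero_replicate_two l.dropLast).comp
      (Filter.tendsto_sub_atTop_nat 1)
    rw [hl_eq] at h
    simp only [hτ]
    exact h
end

section
/- Let D be a countable subset of ℝ that is closed and discrete, with inf D = −∞ and sup D = +∞, and suppose d := inf{|x − y| : x, y ∈ D, x ≠ y} > 0. Let Y be a compact subset of ℝ contained in [0, N], and let M be a positive integer with M·d > N. Fix an order-preserving bijection ι : ℤ → D. Then for each 1 ≤ i ≤ M, the set Wᵢ = {y + ι(Mk + i) : y ∈ Y, k ∈ ℤ} is closed, and if Y is a union of K discrete sets then Wᵢ is a union of at most K discrete sets. -/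
theorem stmt_18 (D : Set ℝ) (hcount : D.Countable) (hclosed : IsClosed D)
    (hdisc : IsDiscreteIn D) (habove : ¬BddAbove D) (hbelow : ¬BddBelow D)
    (d : ℝ) (hd : d = sInf {r : ℝ | ∃ x ∈ D, ∃ y ∈ D, x ≠ y ∧ r = |x - y|})
    (hdpos : 0 < d)
    (Y : Set ℝ) (hYcpt : IsCompact Y) (N : ℝ) (hY : Y ⊆ Set.Icc 0 N)
    (M : ℕ) (hM : 0 < M) (hMd : N < M * d)
    (ι : ℤ → ℝ) (hιrange : Set.range ι = D)
    (hιmono : ∀ n₁ n₂ : ℤ, ι n₁ < ι n₂ ↔ n₁ < n₂) :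
    ∀ i : ℤ, 1 ≤ i → i ≤ M →
      (IsClosed {w : ℝ | ∃ y ∈ Y, ∃ k : ℤ, w = y + ι (M * k + i)}) ∧
      ∀ K : ℕ, (∃ S : Fin K → Set ℝ, (∀ j, IsDiscreteIn (S j)) ∧ Y = ⋃ j, S j) →
        ∃ S : Fin K → Set ℝ, (∀ j, IsDiscreteIn (S j)) ∧
          {w : ℝ | ∃ y ∈ Y, ∃ k : ℤ, w = y + ι (M * k + i)} = ⋃ j, S j := by
  intro i hi1 hiM
  have hD : ∀ n : ℤ, ι n ∈ D := fun n => hιrange ▸ Set.mem_range_self n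
  -- consecutive points of D differ by at least d
  have hstep : ∀ n : ℤ, ι n + d ≤ ι (n + 1) := by
    intro n
    have hlt : ι n < ι (n + 1) := (hιmono n (n + 1)).2 (by omega)
    have hmem : |ι n - ι (n + 1)| ∈ {r : ℝ | ∃ x ∈ D, ∃ y ∈ D, x ≠ y ∧ r = |x - y|} :=
      ⟨ι n, hD n, ι (n + 1), hD (n + 1), ne_of_lt hlt, rfl⟩
    have hbdd : BddBelow {r : ℝ | ∃ x ∈ D, ∃ y ∈ D, x ≠ y ∧ r = |x - y|} := by
      refine ⟨0, ?_⟩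
      rintro r ⟨x, _, y, _, _, rfl⟩
      exact abs_nonneg _
    have hle : d ≤ |ι n - ι (n + 1)| := hd ▸ csInf_le hbdd hmem
    rw [abs_sub_comm, abs_of_pos (by linarith)] at hle
    linarith
  have hmulti : ∀ n : ℤ, ∀ m : ℕ, ι n + m * d ≤ ι (n + m) := by
    intro n m
    induction m with
    | zero => simp
    | succ m ih =>
      have h1 := hstep (n + m)
      have h2 : (n + (m + 1 : ℕ) : ℤ) = (n + (m : ℤ)) + 1 := by push_cast; ring
      rw [h2]
      push_cast
      push_cast at ih
      linarith
  set c : ℤ → ℝ := fun k => ι (M * k + i) with hc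
  set g : ℝ := M * d - N with hg
  have hgpos : 0 < g := by simp only [hg]; linarith
  -- separation between translates
  have key : ∀ y ∈ Y, ∀ y' ∈ Y, ∀ k k' : ℤ, k < k' →
      g ≤ (y' + c k') - (y + c k) := by
    intro y hy y' hy' k k' hkk'
    have hy0 := hY hy
    have hy'0 := hY hy'
    simp only [Set.mem_Icc] at hy0 hy'0
    set m : ℕ := ((M : ℤ) * (k' - k)).toNat with hm
    have hmz : (m : ℤ) = (M : ℤ) * (k' - k) := by
      refine Int.toNat_of_nonneg (mul_nonneg (by positivity) (by omega))
    have hidx : ((M : ℤ) * k + i) + (m : ℤ) = (M : ℤ) * k' + i := by rw [hmz]; ring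
    have h1 := hmulti ((M : ℤ) * k + i) m
    rw [hidx] at h1
    have hMm : (M : ℤ) ≤ (m : ℤ) := by
      have h0 : (1 : ℤ) ≤ k' - k := by omega
      nlinarith [hmz]
    have hMm' : (M : ℝ) ≤ (m : ℝ) := by exact_mod_cast hMm
    have h3 : (M : ℝ) * d ≤ (m : ℝ) * d := mul_le_mul_of_nonneg_right hMm' hdpos.le
    simp only [hc, hg]
    linarith
  have hsep : ∀ y ∈ Y, ∀ y' ∈ Y, ∀ k k' : ℤ, k ≠ k' →
      g ≤ |(y + c k) - (y' + c k')| := by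
    intro y hy y' hy' k k' hkk'
    rcases lt_or_gt_of_ne hkk' with h | h
    · have := key y hy y' hy' k k' h
      rw [abs_sub_comm]
      calc g ≤ (y' + c k') - (y + c k) := this
        _ ≤ |(y' + c k') - (y + c k)| := le_abs_self _
    · have := key y' hy' y hy k' k h
      calc g ≤ (y + c k) - (y' + c k') := this
        _ ≤ |(y + c k) - (y' + c k')| := le_abs_self _
  set W : Set ℝ := {w : ℝ | ∃ y ∈ Y, ∃ k : ℤ, w = y + ι (M * k + i)} with hW
  have hWmem : ∀ w, w ∈ W ↔ ∃ y ∈ Y, ∃ k : ℤ, w = y + c k := by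
    intro w; rfl
  constructor
  · -- closedness
    rw [← isOpen_compl_iff, Metric.isOpen_iff]
    intro w hw
    by_cases hball : ∃ x ∈ Metric.ball w (g / 2), x ∈ W
    · obtain ⟨x₀, hx₀b, hx₀W⟩ := hball
      obtain ⟨y₀, hy₀, k₀, hx₀⟩ := (hWmem x₀).1 hx₀W
      have hcpt : IsCompact ((fun y => y + c k₀) '' Y) :=
        hYcpt.image (continuous_id.add continuous_const)
      have hwne : w ∉ (fun y => y + c k₀) '' Y := by
        rintro ⟨y, hy, hyw⟩
        exact hw ((hWmem w).2 ⟨y, hy, k₀, hyw.symm⟩)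
      have hop := hcpt.isClosed.isOpen_compl
      rw [Metric.isOpen_iff] at hop
      obtain ⟨ε, hε, hsub⟩ := hop w hwne
      refine ⟨min ε (g / 2), lt_min hε (by linarith), ?_⟩
      intro x hx
      simp only [Metric.mem_ball] at hx hx₀b
      intro hxW
      obtain ⟨y, hy, k, hxe⟩ := (hWmem x).1 hxW
      by_cases hk : k = k₀
      · subst hk
        have : x ∈ (fun y => y + c k) '' Y := ⟨y, hy, hxe.symm⟩
        exact hsub (by simp only [Metric.mem_ball]; exact lt_of_lt_of_le hx (min_le_left _ _)) this
      · have hs := hsep y hy y₀ hy₀ k k₀ hk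
        rw [← hxe, ← hx₀] at hs
        have h1 : dist x w < g / 2 := lt_of_lt_of_le hx (min_le_right _ _)
        have h2 : dist x₀ w < g / 2 := hx₀b
        rw [Real.dist_eq] at h1 h2
        have : |x - x₀| < g := by
          calc |x - x₀| ≤ |x - w| + |x₀ - w| := abs_sub_le_iff.mpr ⟨by
              have := abs_sub_abs_le_abs_sub x x₀
              cases abs_cases (x - w) <;> cases abs_cases (x₀ - w) <;> linarith [le_abs_self (x - w), le_abs_self (x₀ - w), neg_abs_le (x - w), neg_abs_le (x₀ - w)],
            by linarith [le_abs_self (x - w), le_abs_self (x₀ - w), neg_abs_le (x - w), neg_abs_le (x₀ - w)]⟩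
            _ < g := by linarith
        linarith
    · refine ⟨g / 2, by linarith, ?_⟩
      intro x hx hxW
      exact hball ⟨x, hx, hxW⟩
  · -- discreteness
    rintro K ⟨S, hS, hYS⟩
    refine ⟨fun j => {w : ℝ | ∃ y ∈ S j, ∃ k : ℤ, w = y + c k}, ?_, ?_⟩
    · rintro j x ⟨y, hy, k, hx⟩
      have hySj : S j ⊆ Y := hYS ▸ Set.subset_iUnion S j
      obtain ⟨U, hUopen, hUS⟩ := hS j y hy
      refine ⟨((fun w => w - c k) ⁻¹' U) ∩ Metric.ball x g,
        IsOpen.inter (hUopen.preimage (continuous_sub_right _)) Metric.isOpen_ball, ?_⟩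
      ext w
      simp only [Set.mem_inter_iff, Set.mem_preimage, Metric.mem_ball, Set.mem_setOf_eq,
        Set.mem_singleton_iff]
      constructor
      · rintro ⟨⟨hwU, hwball⟩, y', hy', k', hwe⟩
        by_cases hk : k' = k
        · subst hk
          have : w - c k' ∈ U ∩ S j := ⟨hwU, by rw [hwe]; simpa using hy'⟩
          rw [hUS, Set.mem_singleton_iff] at this
          rw [hx, ← this, hwe]
          ring
        · exfalso
          have hs := hsep y' (hySj hy') y (hySj hy) k' k hk
          rw [← hwe, ← hx] at hs
          rw [Real.dist_eq] at hwball
          linarith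
      · rintro rfl
        have hyU : y ∈ U := by
          have : y ∈ U ∩ S j := by rw [hUS]; rfl
          exact this.1
        refine ⟨⟨by rw [hx]; simpa using hyU, by simpa using hgpos⟩, y, hy, k, hx⟩
    · ext w
      simp only [hWmem, Set.mem_iUnion, Set.mem_setOf_eq]
      constructor
      · rintro ⟨y, hy, k, hw⟩
        rw [hYS] at hy
        obtain ⟨j, hj⟩ := Set.mem_iUnion.1 hy
        exact ⟨j, y, hj, k, hw⟩
      · rintro ⟨j, y, hj, k, hw⟩
        exact ⟨y, hYS ▸ Set.mem_iUnion.2 ⟨j, hj⟩, k, hw⟩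
end
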